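/- Let $(X,\mu)$ be a measure space with countable measurable partition $(Q_i)$ and $1 \le p \le q \le \infty$. Let $T$ be bounded from $L^p(X)$ to $L^q(X)$, and suppose each index $i$ has at most $M$ 'neighbors' $j$ in a symmetric relation $R$ (i.e., $\#\{j : (i,j) \in R\} \le M$ for all $i$). Then the on-diagonal part $[T]_R := \sum_{(i,j) \in R} P_{Q_j} T P_{Q_i}$ satisfies $\|[T]_R\|_{L^p \to L^q} \le C(M,q) \|T\|_{L^p \to L^q}$. -/

import Mathlib

open MeasureTheory Set
open scoped ENNReal

private lemma sum_rpow_le_rpow_sum' {ι : Type*} (s : Finset ι) (f : ι → ℝ≥0∞) {t : ℝ}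
    (ht : 1 ≤ t) : ∑ i ∈ s, f i ^ t ≤ (∑ i ∈ s, f i) ^ t := by
  classical
  induction s using Finset.induction_on with
  | empty => simp [ENNReal.zero_rpow_of_pos (lt_of_lt_of_le zero_lt_one ht)]
  | insert a s h ih =>
      rw [Finset.sum_insert h, Finset.sum_insert h]
      calc _ ≤ _ := add_le_add_right ih _
        _ ≤ _ := ENNReal.add_rpow_le_rpow_add _ _ ht

private lemma tsum_rpow_le_rpow_tsum' {ι : Type*} [Countable ι] (f : ι → ℝ≥0∞) {t : ℝ}
    (ht : 1 ≤ t) : ∑' i, f i ^ t ≤ (∑' i, f i) ^ t := by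
  rw [ENNReal.tsum_eq_iSup_sum (f := fun i => f i ^ t)]
  refine iSup_le fun s => (sum_rpow_le_rpow_sum' s f ht).trans ?_
  exact ENNReal.rpow_le_rpow (ENNReal.sum_le_tsum s) (zero_le_one.trans ht)

/-- Boundedness of the "on-diagonal" part `∑_{(i,j) ∈ R} P_{Q_j} T P_{Q_i}` of an
operator, for a bounded-degree symmetric relation `R` on the indices of a countable
measurable partition. -/
theorem on_diagonal_part_bounded
    {X : Type*} [MeasurableSpace X] (μ : Measure X)
    (p q : ℝ≥0∞) (hp : 1 ≤ p) (hpq : p ≤ q)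
    (Q : ℕ → Set X) (hQmeas : ∀ i, MeasurableSet (Q i))
    (hQpart : ∀ x : X, ∃! i : ℕ, x ∈ Q i)
    (R : ℕ → ℕ → Prop) (hRsymm : ∀ i j, R i j → R j i)
    (M : ℕ) (hdeg : ∀ i : ℕ, ({j : ℕ | R i j}).Finite ∧ ({j : ℕ | R i j}).ncard ≤ M)
    (T : (X → ℂ) →ₗ[ℂ] (X → ℂ))
    (CT : ℝ≥0∞) (hT : ∀ f : X → ℂ, eLpNorm (T f) q μ ≤ CT * eLpNorm f p μ) :
    ∃ C : ℝ≥0∞, C ≠ ∞ ∧ ∀ f : X → ℂ,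
      eLpNorm
        (fun x => ∑' pr : {pr : ℕ × ℕ // R pr.1 pr.2},
          (Q (pr : ℕ × ℕ).2).indicator (T ((Q (pr : ℕ × ℕ).1).indicator f)) x) q μ
        ≤ C * CT * eLpNorm f p μ := by
  classical
  -- the index of the unique piece containing x
  set ix : X → ℕ := fun x => (hQpart x).choose with hix
  have hixmem : ∀ x, x ∈ Q (ix x) := fun x => (hQpart x).choose_spec.1
  have huniq : ∀ {x : X} {i j : ℕ}, x ∈ Q i → x ∈ Q j → i = j := by
    intro x i j hi hj
    exact ((hQpart x).choose_spec.2 i hi).trans ((hQpart x).choose_spec.2 j hj).symm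
  -- neighbor finsets
  set N : ℕ → Finset ℕ := fun i => (hdeg i).1.toFinset with hNdef
  have hN : ∀ i j, j ∈ N i ↔ R i j := fun i j => (hdeg i).1.mem_toFinset
  have hNcard : ∀ i, (N i).card ≤ M := by
    intro i
    have := (hdeg i).2
    rwa [Set.ncard_eq_toFinset_card _ (hdeg i).1] at this
  -- disjointness of the partition
  have hQdisj : Pairwise (Function.onFun Disjoint Q) := by
    intro i j hij
    simp only [Function.onFun]
    rw [Set.disjoint_left]
    exact fun x hxi hxj => hij (huniq hxi hxj)
  have hunion : ⋃ i, Q i = univ := by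
    ext x
    simp only [mem_iUnion, mem_univ, iff_true]
    exact ⟨ix x, hixmem x⟩
  -- the union of neighboring pieces
  set A : ℕ → Set X := fun i => ⋃ j ∈ N i, Q j with hAdef
  have hAmeas : ∀ i, MeasurableSet (A i) :=
    fun i => (N i).measurableSet_biUnion fun j _ => hQmeas j
  refine ⟨(M : ℝ≥0∞) + 1, by simp, fun f => ?_⟩
  have hD1 : (1 : ℝ≥0∞) ≤ (M : ℝ≥0∞) + 1 := le_add_self
  -- indicator of A i is the sum of indicators of neighboring pieces
  have hsum_ind : ∀ i, (A i).indicator f = ∑ j ∈ N i, (Q j).indicator f := by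
    intro i
    funext y
    rw [Finset.sum_apply]
    by_cases hy : y ∈ A i
    · obtain ⟨j0, hj0N, hj0y⟩ : ∃ j0 ∈ N i, y ∈ Q j0 := by
        simpa only [hAdef, mem_iUnion, exists_prop] using hy
      rw [Set.indicator_of_mem hy, Finset.sum_eq_single j0]
      · rw [Set.indicator_of_mem hj0y]
      · intro j hj hne
        exact Set.indicator_of_notMem (fun hyQ => hne (huniq hyQ hj0y)) f
      · exact fun h => absurd hj0N h
    · rw [Set.indicator_of_notMem hy]
      refine (Finset.sum_eq_zero fun j hj => ?_).symm
      exact Set.indicator_of_notMem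
        (fun hyQ => hy (Set.mem_biUnion hj hyQ)) f
  -- pointwise identification of the on-diagonal sum
  have hg : ∀ x, (∑' pr : {pr : ℕ × ℕ // R pr.1 pr.2},
      (Q (pr : ℕ × ℕ).2).indicator (T ((Q (pr : ℕ × ℕ).1).indicator f)) x)
      = T ((A (ix x)).indicator f) x := by
    intro x
    have hTsum : T ((A (ix x)).indicator f) x
        = ∑ j ∈ N (ix x), T ((Q j).indicator f) x := by
      rw [hsum_ind, map_sum]
      exact Finset.sum_apply _ _ _
    set s : Finset {pr : ℕ × ℕ // R pr.1 pr.2} :=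
      ((N (ix x)).image (fun j => (j, ix x))).subtype _ with hs
    have h0 : ∀ pr : {pr : ℕ × ℕ // R pr.1 pr.2}, pr ∉ s →
        (Q (pr : ℕ × ℕ).2).indicator (T ((Q (pr : ℕ × ℕ).1).indicator f)) x = 0 := by
      intro pr hpr
      refine Set.indicator_of_notMem (fun hx2 => hpr ?_) _
      have h2 : (pr : ℕ × ℕ).2 = ix x := huniq hx2 (hixmem x)
      rw [hs, Finset.mem_subtype, Finset.mem_image]
      refine ⟨(pr : ℕ × ℕ).1, ?_, ?_⟩
      · rw [hN]
        exact hRsymm _ _ (h2 ▸ pr.2)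
      · rw [← h2]
    have hall : ∀ pr ∈ (N (ix x)).image (fun j => (j, ix x)), R pr.1 pr.2 := by
      intro pr hpr
      rw [Finset.mem_image] at hpr
      obtain ⟨j, hjN, rfl⟩ := hpr
      exact hRsymm _ _ ((hN _ _).mp hjN)
    have hinj : ∀ a ∈ N (ix x), ∀ b ∈ N (ix x),
        (fun j => (j, ix x)) a = (fun j => (j, ix x)) b → a = b := by
      intro a _ b _ hab
      exact (Prod.mk.injEq _ _ _ _ ▸ hab).1
    calc (∑' pr : {pr : ℕ × ℕ // R pr.1 pr.2},
          (Q (pr : ℕ × ℕ).2).indicator (T ((Q (pr : ℕ × ℕ).1).indicator f)) x)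
        = ∑ pr ∈ s, (Q (pr : ℕ × ℕ).2).indicator (T ((Q (pr : ℕ × ℕ).1).indicator f)) x :=
          tsum_eq_sum h0
      _ = ∑ pr ∈ (N (ix x)).image (fun j => (j, ix x)),
            (Q pr.2).indicator (T ((Q pr.1).indicator f)) x :=
          Finset.sum_subtype_of_mem (fun pr => (Q pr.2).indicator (T ((Q pr.1).indicator f)) x) hall
      _ = ∑ j ∈ N (ix x), (Q (j, ix x).2).indicator (T ((Q (j, ix x).1).indicator f)) x :=
          Finset.sum_image hinj
      _ = ∑ j ∈ N (ix x), T ((Q j).indicator f) x :=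
          Finset.sum_congr rfl fun j hj => Set.indicator_of_mem (hixmem x) _
      _ = T ((A (ix x)).indicator f) x := hTsum.symm
  have hfun : (fun x => ∑' pr : {pr : ℕ × ℕ // R pr.1 pr.2},
      (Q (pr : ℕ × ℕ).2).indicator (T ((Q (pr : ℕ × ℕ).1).indicator f)) x)
      = fun x => T ((A (ix x)).indicator f) x := funext hg
  rw [hfun]
  set G : X → ℂ := fun x => T ((A (ix x)).indicator f) x with hG
  rcases eq_or_ne q ∞ with hq | hq
  · -- case q = ∞
    subst hq
    rw [eLpNorm_exponent_top, eLpNormEssSup]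
    have hae : ∀ᵐ x ∂μ, ∀ i : ℕ,
        (‖T ((A i).indicator f) x‖₊ : ℝ≥0∞) ≤ eLpNormEssSup (T ((A i).indicator f)) μ :=
      ae_all_iff.2 fun i => ae_le_eLpNormEssSup
    have hbound : essSup (fun x => (‖G x‖₊ : ℝ≥0∞)) μ ≤ CT * eLpNorm f p μ := by
      refine essSup_le_of_ae_le _ (hae.mono fun x hx => ?_)
      calc (‖G x‖₊ : ℝ≥0∞) ≤ eLpNormEssSup (T ((A (ix x)).indicator f)) μ := hx (ix x)
        _ = eLpNorm (T ((A (ix x)).indicator f)) ∞ μ := (eLpNorm_exponent_top).symm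
        _ ≤ CT * eLpNorm ((A (ix x)).indicator f) p μ := hT _
        _ ≤ CT * eLpNorm f p μ := mul_le_mul_right (eLpNorm_indicator_le f) _
    refine hbound.trans ?_
    rw [mul_assoc]
    exact le_mul_of_one_le_left zero_le hD1
  · -- case q < ∞
    have hq1 : 1 ≤ q := hp.trans hpq
    have hq0 : q ≠ 0 := fun h => by simp [h] at hq1
    have hpT : p ≠ ∞ := fun h => hq (top_le_iff.mp (h ▸ hpq))
    have hp0 : p ≠ 0 := fun h => by simp [h] at hp
    set prr : ℝ := p.toReal with hprr
    set qrr : ℝ := q.toReal with hqrr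
    have hpr1 : 1 ≤ prr := by
      rw [hprr, ← ENNReal.toReal_one]
      exact ENNReal.toReal_mono hpT hp
    have hqr1 : 1 ≤ qrr := by
      rw [hqrr, ← ENNReal.toReal_one]
      exact ENNReal.toReal_mono hq hq1
    have hprpos : 0 < prr := lt_of_lt_of_le zero_lt_one hpr1
    have hqrpos : 0 < qrr := lt_of_lt_of_le zero_lt_one hqr1
    have hple : prr ≤ qrr := ENNReal.toReal_mono hq hpq
    set t : ℝ := qrr / prr with ht
    have ht1 : 1 ≤ t := (one_le_div hprpos).mpr hple
    have hprt : prr * t = qrr := by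
      rw [ht]
      field_simp
    -- the local L^p masses
    set b : ℕ → ℝ≥0∞ := fun j => ∫⁻ x in Q j, (‖f x‖₊ : ℝ≥0∞) ^ prr ∂μ with hb
    have hB : ∑' j, b j = (eLpNorm f p μ) ^ prr := by
      rw [eLpNorm_eq_lintegral_rpow_enorm_toReal hp0 hpT, ← ENNReal.rpow_mul, one_div,
        inv_mul_cancel₀ (ne_of_gt hprpos), ENNReal.rpow_one, hb,
        ← lintegral_iUnion hQmeas hQdisj, hunion, Measure.restrict_univ]
      rfl
    -- L^p norm of the indicator of A i
    have hAnorm : ∀ i, (eLpNorm ((A i).indicator f) p μ) ^ prr = ∑ j ∈ N i, b j := by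
      intro i
      rw [eLpNorm_eq_lintegral_rpow_enorm_toReal hp0 hpT, ← ENNReal.rpow_mul, one_div,
        inv_mul_cancel₀ (ne_of_gt hprpos), ENNReal.rpow_one]
      have hind : ∀ x, (‖(A i).indicator f x‖₊ : ℝ≥0∞) ^ prr
          = (A i).indicator (fun x => (‖f x‖₊ : ℝ≥0∞) ^ prr) x := by
        intro x
        by_cases hx : x ∈ A i
        · rw [Set.indicator_of_mem hx, Set.indicator_of_mem hx]
        · rw [Set.indicator_of_notMem hx, Set.indicator_of_notMem hx]
          simp [ENNReal.zero_rpow_of_pos hprpos]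
      simp only [enorm_eq_nnnorm, ← hprr]
      simp_rw [hind]
      rw [lintegral_indicator (hAmeas i), hAdef]
      exact lintegral_biUnion_finset
        (fun a _ c _ hac => hQdisj hac) (fun j _ => hQmeas j) _
    -- main estimate on each piece Q i
    have step_i : ∀ i, ∫⁻ x in Q i, (‖G x‖₊ : ℝ≥0∞) ^ qrr ∂μ
        ≤ (CT * eLpNorm ((A i).indicator f) p μ) ^ qrr := by
      intro i
      have hGeq : ∀ x ∈ Q i,
          (‖G x‖₊ : ℝ≥0∞) ^ qrr = (‖T ((A i).indicator f) x‖₊ : ℝ≥0∞) ^ qrr := by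
        intro x hx
        have : ix x = i := huniq (hixmem x) hx
        rw [hG]
        simp only [this]
      calc ∫⁻ x in Q i, (‖G x‖₊ : ℝ≥0∞) ^ qrr ∂μ
          = ∫⁻ x in Q i, (‖T ((A i).indicator f) x‖₊ : ℝ≥0∞) ^ qrr ∂μ :=
            lintegral_congr_ae
              (Filter.eventually_of_mem (self_mem_ae_restrict (hQmeas i)) hGeq)
        _ ≤ ∫⁻ x, (‖T ((A i).indicator f) x‖₊ : ℝ≥0∞) ^ qrr ∂μ :=
            setLIntegral_le_lintegral _ _
        _ = (eLpNorm (T ((A i).indicator f)) q μ) ^ qrr := by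
            rw [eLpNorm_eq_lintegral_rpow_enorm_toReal hq0 hq, ← ENNReal.rpow_mul, one_div,
              inv_mul_cancel₀ (ne_of_gt hqrpos), ENNReal.rpow_one]
            rfl
        _ ≤ (CT * eLpNorm ((A i).indicator f) p μ) ^ qrr :=
            ENNReal.rpow_le_rpow (hT _) (le_of_lt hqrpos)
    -- counting estimate: ∑' i ∑_{j ∈ N i} b j ≤ M * ∑' j b j
    set e : ℕ → ℕ → ℝ≥0∞ := fun i j => if R i j then b j else 0 with he
    have hcount : ∑' i, (∑ j ∈ N i, b j) ≤ (M : ℝ≥0∞) * ∑' j, b j := by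
      have h1 : ∀ i, ∑ j ∈ N i, b j = ∑' j, e i j := by
        intro i
        rw [tsum_eq_sum (s := N i) (fun j hj => if_neg (fun hR => hj ((hN i j).mpr hR)))]
        exact (Finset.sum_congr rfl fun j hj => (if_pos ((hN i j).mp hj)).symm)
      simp_rw [h1]
      rw [ENNReal.tsum_comm]
      have h2 : ∀ j, ∑' i, e i j ≤ (M : ℝ≥0∞) * b j := by
        intro j
        have h3 : ∀ i, i ∉ N j → e i j = 0 := by
          intro i hi
          exact if_neg (fun hR => hi ((hN j i).mpr (hRsymm _ _ hR)))
        rw [tsum_eq_sum h3]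
        calc ∑ i ∈ N j, e i j ≤ ∑ _i ∈ N j, b j :=
              Finset.sum_le_sum fun i _ => by
                by_cases hR : R i j <;> simp [he, hR]
          _ = (N j).card • b j := by rw [Finset.sum_const]
          _ ≤ (M : ℝ≥0∞) * b j := by
              rw [nsmul_eq_mul]
              exact mul_le_mul_left (by exact_mod_cast Nat.cast_le.mpr (hNcard j)) _
      calc ∑' j, ∑' i, e i j ≤ ∑' j, (M : ℝ≥0∞) * b j := ENNReal.tsum_le_tsum h2
        _ = (M : ℝ≥0∞) * ∑' j, b j := ENNReal.tsum_mul_left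
    -- put everything together
    set D : ℝ≥0∞ := (M : ℝ≥0∞) + 1 with hDdef
    have hMD : (M : ℝ≥0∞) ≤ D ^ prr := by
      calc (M : ℝ≥0∞) ≤ D := le_self_add
        _ = D ^ (1 : ℝ) := (ENNReal.rpow_one D).symm
        _ ≤ D ^ prr := ENNReal.rpow_le_rpow_of_exponent_le hD1 hpr1
    have hfinal : ∫⁻ x, (‖G x‖₊ : ℝ≥0∞) ^ qrr ∂μ ≤ (D * CT * eLpNorm f p μ) ^ qrr := by
      calc ∫⁻ x, (‖G x‖₊ : ℝ≥0∞) ^ qrr ∂μ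
          = ∑' i, ∫⁻ x in Q i, (‖G x‖₊ : ℝ≥0∞) ^ qrr ∂μ := by
            rw [← lintegral_iUnion hQmeas hQdisj, hunion, Measure.restrict_univ]
        _ ≤ ∑' i, (CT * eLpNorm ((A i).indicator f) p μ) ^ qrr :=
            ENNReal.tsum_le_tsum step_i
        _ = CT ^ qrr * ∑' i, (eLpNorm ((A i).indicator f) p μ) ^ qrr := by
            simp_rw [ENNReal.mul_rpow_of_nonneg _ _ (le_of_lt hqrpos)]
            rw [ENNReal.tsum_mul_left]
        _ = CT ^ qrr * ∑' i, ((∑ j ∈ N i, b j)) ^ t := by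
            congr 1
            refine tsum_congr fun i => ?_
            rw [← hAnorm i, ← ENNReal.rpow_mul, hprt]
        _ ≤ CT ^ qrr * (∑' i, ∑ j ∈ N i, b j) ^ t :=
            mul_le_mul_right (tsum_rpow_le_rpow_tsum' _ ht1) _
        _ ≤ CT ^ qrr * ((M : ℝ≥0∞) * ∑' j, b j) ^ t :=
            mul_le_mul_right (ENNReal.rpow_le_rpow hcount (le_of_lt (lt_of_lt_of_le zero_lt_one ht1))) _
        _ ≤ CT ^ qrr * ((D ^ prr) * (eLpNorm f p μ) ^ prr) ^ t := by
            rw [hB]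
            exact mul_le_mul_right
              (ENNReal.rpow_le_rpow (mul_le_mul_left hMD _)
                (le_of_lt (lt_of_lt_of_le zero_lt_one ht1))) _
        _ = (D * CT * eLpNorm f p μ) ^ qrr := by
            rw [← ENNReal.mul_rpow_of_nonneg D _ (le_of_lt hprpos), ← ENNReal.rpow_mul, hprt,
              ← ENNReal.mul_rpow_of_nonneg _ _ (le_of_lt hqrpos)]
            ring_nf
    rw [eLpNorm_eq_lintegral_rpow_enorm_toReal hq0 hq]
    calc (∫⁻ x, (‖G x‖₊ : ℝ≥0∞) ^ qrr ∂μ) ^ (1 / qrr)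
        ≤ ((D * CT * eLpNorm f p μ) ^ qrr) ^ (1 / qrr) :=
          ENNReal.rpow_le_rpow hfinal (by positivity)
      _ = D * CT * eLpNorm f p μ := by
          rw [← ENNReal.rpow_mul, mul_one_div, div_self (ne_of_gt hqrpos), ENNReal.rpow_one]
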